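/- arXiv:2111.09727 — 3 statements merged into one kernel-verified Lean document; each statement's English description precedes it below -/
import Mathlib

section
/- Let R be an n×n matrix with nonnegative entries such that every row sum satisfies ∑_j R_{ij} ≤ 1, and suppose R is outflow-connected: for every index i there exist an index j and an integer ℓ ≥ 0 such that (R^ℓ)_{ij} > 0 and ∑_k R_{jk} < 1. Then the spectral radius of R is strictly less than 1. -/
open Matrix BigOperators

lemma rowsum_pow {n : ℕ} (R : Matrix (Fin n) (Fin n) ℝ) (a b : ℕ) (i : Fin n) :
    ∑ j, (R ^ (a + b)) i j = ∑ k, (R ^ a) i k * (∑ j, (R ^ b) k j) := by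
  rw [pow_add]
  simp only [Matrix.mul_apply, Finset.mul_sum]
  rw [Finset.sum_comm]

lemma pow_nonneg' {n : ℕ} {R : Matrix (Fin n) (Fin n) ℝ}
    (hnonneg : ∀ i j, 0 ≤ R i j) (ℓ : ℕ) (i j : Fin n) : 0 ≤ (R ^ ℓ) i j := by
  induction ℓ generalizing i j with
  | zero => simp [Matrix.one_apply]; positivity
  | succ m ih =>
    rw [pow_succ, Matrix.mul_apply]
    exact Finset.sum_nonneg fun k _ => mul_nonneg (ih i k) (hnonneg k j)

lemma pow_rowsum_le {n : ℕ} {R : Matrix (Fin n) (Fin n) ℝ}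
    (hnonneg : ∀ i j, 0 ≤ R i j) (hrow : ∀ i, ∑ j, R i j ≤ 1)
    (ℓ : ℕ) (i : Fin n) : ∑ j, (R ^ ℓ) i j ≤ 1 := by
  induction ℓ generalizing i with
  | zero => simp [Matrix.one_apply]
  | succ m ih =>
    have h := rowsum_pow R m 1 i
    rw [pow_one] at h
    rw [h]
    calc ∑ k, (R ^ m) i k * (∑ j, R k j)
        ≤ ∑ k, (R ^ m) i k * 1 := by
          apply Finset.sum_le_sum
          intro k _
          exact mul_le_mul_of_nonneg_left (hrow k) (pow_nonneg' hnonneg m i k)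
      _ ≤ 1 := by simpa using ih i

lemma exists_good_pow {n : ℕ} {R : Matrix (Fin n) (Fin n) ℝ}
    (hnonneg : ∀ i j, 0 ≤ R i j) (hrow : ∀ i, ∑ j, R i j ≤ 1)
    (houtflow : ∀ i, ∃ j, ∃ ℓ : ℕ, 0 < (R ^ ℓ) i j ∧ ∑ k, R j k < 1) :
    ∃ m : ℕ, 1 ≤ m ∧ ∀ i, ∑ j, (R ^ m) i j < 1 := by
  -- strict decrease at step ℓ_i + 1
  have hstrict : ∀ i, ∃ ℓ : ℕ, ∑ j, (R ^ (ℓ + 1)) i j < 1 := by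
    intro i
    obtain ⟨j, ℓ, hpos, hlt⟩ := houtflow i
    refine ⟨ℓ, ?_⟩
    have h := rowsum_pow R ℓ 1 i
    rw [pow_one] at h
    rw [h]
    calc ∑ k, (R ^ ℓ) i k * (∑ j', R k j')
        < ∑ k, (R ^ ℓ) i k * 1 := by
          apply Finset.sum_lt_sum
          · intro k _
            exact mul_le_mul_of_nonneg_left (hrow k) (pow_nonneg' hnonneg ℓ i k)
          · exact ⟨j, Finset.mem_univ j, by nlinarith⟩
      _ ≤ 1 := by simpa using pow_rowsum_le hnonneg hrow ℓ i
  choose f hf using hstrict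
  refine ⟨(Finset.univ.sup f) + 1, le_add_self, fun i => ?_⟩
  have hle : f i + 1 ≤ Finset.univ.sup f + 1 :=
    Nat.add_le_add_right (Finset.le_sup (Finset.mem_univ i)) 1
  obtain ⟨c, hc⟩ := Nat.exists_eq_add_of_le hle
  rw [hc, rowsum_pow R (f i + 1) c i]
  calc ∑ k, (R ^ (f i + 1)) i k * (∑ j, (R ^ c) k j)
      ≤ ∑ k, (R ^ (f i + 1)) i k * 1 := by
        apply Finset.sum_le_sum
        intro k _
        exact mul_le_mul_of_nonneg_left (pow_rowsum_le hnonneg hrow c k)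
          (pow_nonneg' hnonneg (f i + 1) i k)
    _ < 1 := by simpa using hf i

/-- Spectral radius (over ℂ) of a real matrix is < 1: every complex
eigenvalue has modulus strictly less than one. -/
def SpecRadiusLtOne {n : ℕ} (R : Matrix (Fin n) (Fin n) ℝ) : Prop :=
  ∀ μ ∈ spectrum ℂ (R.map (algebraMap ℝ ℂ)), ‖μ‖ < 1

theorem stmt0 {n : ℕ} (R : Matrix (Fin n) (Fin n) ℝ)
    (hnonneg : ∀ i j, 0 ≤ R i j)
    (hrow : ∀ i, ∑ j, R i j ≤ 1)
    (houtflow : ∀ i, ∃ j, ∃ ℓ : ℕ, 0 < (R ^ ℓ) i j ∧ ∑ k, R j k < 1) :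
    SpecRadiusLtOne R := by
  intro μ hμ
  obtain ⟨m, hm1, hmlt⟩ := exists_good_pow hnonneg hrow houtflow
  set M : Matrix (Fin n) (Fin n) ℂ := R.map (algebraMap ℝ ℂ) with hM
  -- get eigenvector
  have hspec : μ ∈ spectrum ℂ (Matrix.toLinAlgEquiv' M) := by
    rw [AlgEquiv.spectrum_eq]; exact hμ
  have hev : Module.End.HasEigenvalue (Matrix.toLinAlgEquiv' M : Module.End ℂ (Fin n → ℂ)) μ :=
    Module.End.hasEigenvalue_iff_mem_spectrum.mpr hspec
  obtain ⟨v, hv⟩ := Module.End.HasEigenvalue.exists_hasEigenvector hev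
  have hveq : M *ᵥ v = μ • v := by
    have h1 := Module.End.mem_eigenspace_iff.mp hv.1
    rw [show ((Matrix.toLinAlgEquiv' M : Module.End ℂ (Fin n → ℂ)) v) = M *ᵥ v from rfl] at h1
    exact h1
  have hvne : v ≠ 0 := hv.2
  -- iterate
  have hpow : ∀ k : ℕ, (M ^ k) *ᵥ v = (μ ^ k) • v := by
    intro k
    induction k with
    | zero => simp
    | succ k ih =>
      rw [pow_succ', ← Matrix.mulVec_mulVec, ih, Matrix.mulVec_smul, hveq,
        smul_smul, ← pow_succ]
  have hMpow : M ^ m = (R ^ m).map (algebraMap ℝ ℂ) := by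
    have := map_pow ((algebraMap ℝ ℂ).mapMatrix) R m
    simpa [hM, RingHom.mapMatrix_apply] using this.symm
  -- max component
  obtain ⟨i0, hi0⟩ := Function.ne_iff.mp hvne
  obtain ⟨i, -, hi⟩ := Finset.exists_max_image Finset.univ (fun j => ‖v j‖)
    ⟨i0, Finset.mem_univ i0⟩
  have hvipos : 0 < ‖v i‖ :=
    lt_of_lt_of_le (norm_pos_iff.mpr hi0) (hi i0 (Finset.mem_univ i0))
  have hentry : (μ ^ m) * v i = ∑ j, ((R ^ m) i j : ℂ) * v j := by
    have := congrFun (hpow m) i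
    rw [hMpow] at this
    simpa [Matrix.mulVec, dotProduct, Matrix.map_apply] using this.symm
  have hkey : ‖μ‖ ^ m * ‖v i‖ < ‖v i‖ := by
    calc ‖μ‖ ^ m * ‖v i‖ = ‖(μ ^ m) * v i‖ := by
          rw [norm_mul, norm_pow]
      _ = ‖∑ j, ((R ^ m) i j : ℂ) * v j‖ := by rw [hentry]
      _ ≤ ∑ j, ‖((R ^ m) i j : ℂ) * v j‖ := norm_sum_le _ _
      _ = ∑ j, (R ^ m) i j * ‖v j‖ := by
          apply Finset.sum_congr rfl
          intro j _
          rw [norm_mul, Complex.norm_real, Real.norm_eq_abs,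
            abs_of_nonneg (pow_nonneg' hnonneg m i j)]
      _ ≤ ∑ j, (R ^ m) i j * ‖v i‖ := by
          apply Finset.sum_le_sum
          intro j _
          exact mul_le_mul_of_nonneg_left (hi j (Finset.mem_univ j))
            (pow_nonneg' hnonneg m i j)
      _ = (∑ j, (R ^ m) i j) * ‖v i‖ := by rw [Finset.sum_mul]
      _ < 1 * ‖v i‖ := by
          exact mul_lt_mul_of_pos_right (hmlt i) hvipos
      _ = ‖v i‖ := one_mul _
  by_contra hcon
  push_neg at hcon
  have : (1:ℝ) ≤ ‖μ‖ ^ m := one_le_pow₀ hcon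
  nlinarith
end

section
/- Let a ∈ ℝ^n and c ∈ ℝ^n with c_i > 0 for all i. Suppose there exists b ∈ ℝ^n with b_i > 0 for all i such that ∑_i a_i / b_i ≤ min_i (c_i / b_i). If additionally a_i ≥ 0 for all i, then ∑_i a_i / c_i ≤ 1. -/
open BigOperators Finset

lemma Finset.sum_div_le_sum_div_div {ι : Type*} (s : Finset ι) {a b c : ι → ℝ} {m : ℝ}
    (hm : 0 < m) (ha : ∀ i ∈ s, 0 ≤ a i) (hb : ∀ i ∈ s, 0 < b i)
    (hmc : ∀ i ∈ s, m ≤ c i / b i) :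
    ∑ i ∈ s, a i / c i ≤ (∑ i ∈ s, a i / b i) / m := by
  rw [Finset.sum_div]
  refine Finset.sum_le_sum fun i hi => ?_
  have hmb : m * b i ≤ c i := (le_div_iff₀ (hb i hi)).mp (hmc i hi)
  calc a i / c i ≤ a i / (m * b i) := by
        gcongr
        · exact ha i hi
        · exact mul_pos hm (hb i hi)
    _ = a i / b i / m := by rw [div_div, mul_comm]

theorem Finset.sum_div_le_one_of_sum_div_le_inf' {ι : Type*} {s : Finset ι} (hs : s.Nonempty)
    {a b c : ι → ℝ} (ha : ∀ i ∈ s, 0 ≤ a i) (hb : ∀ i ∈ s, 0 < b i) (hc : ∀ i ∈ s, 0 < c i)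
    (h : ∑ i ∈ s, a i / b i ≤ s.inf' hs fun i => c i / b i) :
    ∑ i ∈ s, a i / c i ≤ 1 := by
  set m := s.inf' hs fun i => c i / b i
  have hm : 0 < m := (Finset.lt_inf'_iff hs).mpr fun i hi => div_pos (hc i hi) (hb i hi)
  calc ∑ i ∈ s, a i / c i ≤ (∑ i ∈ s, a i / b i) / m :=
        s.sum_div_le_sum_div_div hm ha hb fun i hi => Finset.inf'_le _ hi
    _ ≤ m / m := by gcongr
    _ = 1 := div_self hm.ne'

theorem stmt3 {n : ℕ} (hn : 0 < n) (a c : Fin n → ℝ)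
    (ha : ∀ i, 0 ≤ a i) (hc : ∀ i, 0 < c i)
    (hb : ∃ b : Fin n → ℝ, (∀ i, 0 < b i) ∧
      ∑ i, a i / b i ≤ (Finset.univ.inf' (by simp [Finset.univ_nonempty_iff]; exact Fin.pos_iff_nonempty.mp hn) fun i => c i / b i)) :
    ∑ i, a i / c i ≤ 1 := by
  obtain ⟨b, hb, hsum⟩ := hb
  exact Finset.sum_div_le_one_of_sum_div_le_inf' _ (fun i _ => ha i) (fun i _ => hb i)
    (fun i _ => hc i) hsum
end

section
/- Under the same setup (ẋ = λ(t) − (I − Rᵀ) f(x(t)), R nonnegative with spectral radius < 1, λ ≥ 0, f ≥ 0, x(0) ≥ 0, and x(t) ≥ 0 for all t), for each link i and time t it holds that x_i(t) ≤ ∫_0^t a_i(s) ds + ξ_i, where ξ = (I − Rᵀ)^{-1} x(0) and a(t) = (I − Rᵀ)^{-1} λ(t). -/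
open Matrix BigOperators intervalIntegral

namespace Stmt7Aux

lemma mul_nonneg_entries {n : ℕ} {A B : Matrix (Fin n) (Fin n) ℝ}
    (hA : ∀ i j, 0 ≤ A i j) (hB : ∀ i j, 0 ≤ B i j) : ∀ i j, 0 ≤ (A * B) i j := by
  intro i j
  rw [Matrix.mul_apply]
  exact Finset.sum_nonneg fun k _ => mul_nonneg (hA i k) (hB k j)

lemma pow_nonneg_entries {n : ℕ} {A : Matrix (Fin n) (Fin n) ℝ}
    (hA : ∀ i j, 0 ≤ A i j) : ∀ k i j, 0 ≤ (A ^ k) i j := by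
  intro k
  induction k with
  | zero =>
    intro i j
    rw [pow_zero, Matrix.one_apply]
    split <;> norm_num
  | succ k ih =>
    rw [pow_succ]
    exact mul_nonneg_entries ih hA

section Normed

attribute [local instance] Matrix.linftyOpNormedAddCommGroup Matrix.linftyOpNormedSpace
  Matrix.linftyOpNormedRing Matrix.linftyOpNormedAlgebra

lemma nnnorm_entry_le {n : ℕ} (C : Matrix (Fin n) (Fin n) ℝ) (i j : Fin n) :
    ‖C i j‖₊ ≤ ‖C‖₊ := by
  rw [Matrix.linfty_opNNNorm_def]
  exact le_trans
    (Finset.single_le_sum (f := fun k => ‖C i k‖₊) (fun k _ => zero_le) (Finset.mem_univ j))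
    (Finset.le_sup (f := fun r => ∑ c : Fin n, ‖C r c‖₊) (Finset.mem_univ i))

/-- The entry evaluation as a continuous linear map. -/
noncomputable def entryCLM {n : ℕ} (i j : Fin n) : Matrix (Fin n) (Fin n) ℝ →L[ℝ] ℝ :=
  LinearMap.mkContinuous
    { toFun := fun C => C i j
      map_add' := fun _ _ => rfl
      map_smul' := fun _ _ => rfl } 1
    (fun C => by
      rw [one_mul]
      exact_mod_cast nnnorm_entry_le C i j)

lemma inv_exists {n : ℕ} (R : Matrix (Fin n) (Fin n) ℝ)
    (hnonneg : ∀ i j, 0 ≤ R i j) (hspec : SpecRadiusLtOne R) :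
    ∃ W : Matrix (Fin n) (Fin n) ℝ,
      (1 - R) * W = 1 ∧ W * (1 - R) = 1 ∧ ∀ i j, 0 ≤ W i j := by
  rcases isEmpty_or_nonempty (Fin n) with hn | hn
  · refine ⟨1, Subsingleton.elim _ _, Subsingleton.elim _ _, fun i j => ?_⟩
    exact (hn.false i).elim
  letI : CompleteSpace (Matrix (Fin n) (Fin n) ℝ) :=
    FiniteDimensional.complete ℝ _
  letI : CompleteSpace (Matrix (Fin n) (Fin n) ℂ) :=
    FiniteDimensional.complete ℂ _
  set A : Matrix (Fin n) (Fin n) ℂ := R.map (algebraMap ℝ ℂ) with hA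
  have hρ : spectralRadius ℂ A < 1 := by
    have h1 := spectrum.spectralRadius_lt_of_forall_lt (a := A) (r := 1)
      (fun z hz => by exact_mod_cast hspec z hz)
    simpa using h1
  have hto := spectrum.pow_nnnorm_pow_one_div_tendsto_nhds_spectralRadius A
  have hev : ∀ᶠ N : ℕ in Filter.atTop, (‖A ^ N‖₊ : ENNReal) ^ (1 / (N : ℝ)) < 1 :=
    hto.eventually_lt_const hρ
  obtain ⟨N, hN1, hNlt⟩ := ((Filter.eventually_ge_atTop 1).and hev).exists
  have hxlt : (‖A ^ N‖₊ : ENNReal) < 1 := by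
    by_contra hge
    push_neg at hge
    have h1 : (1 : ENNReal) ≤ (‖A ^ N‖₊ : ENNReal) ^ (1 / (N : ℝ)) := by
      calc (1 : ENNReal) = (1 : ENNReal) ^ (1 / (N : ℝ)) := (ENNReal.one_rpow _).symm
        _ ≤ (‖A ^ N‖₊ : ENNReal) ^ (1 / (N : ℝ)) :=
          ENNReal.rpow_le_rpow hge (by positivity)
    exact absurd hNlt (not_lt.mpr h1)
  have hmapnorm : ∀ C : Matrix (Fin n) (Fin n) ℝ, ‖C.map (algebraMap ℝ ℂ)‖₊ = ‖C‖₊ := by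
    intro C
    simp [Matrix.linfty_opNNNorm_def, Matrix.map_apply, nnnorm_algebraMap']
  have hApow : A ^ N = (R ^ N).map (algebraMap ℝ ℂ) := by
    simp only [hA, ← RingHom.mapMatrix_apply, ← map_pow]
  have hB : ‖R ^ N‖ < 1 := by
    have h2 : ‖R ^ N‖₊ < 1 := by
      rw [← hmapnorm (R ^ N), ← hApow]
      exact_mod_cast hxlt
    exact_mod_cast h2
  set B : Matrix (Fin n) (Fin n) ℝ := R ^ N with hBdef
  set V : Matrix (Fin n) (Fin n) ℝ := ∑' k : ℕ, B ^ k with hV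
  have hV1 : (1 - B) * V = 1 := mul_neg_geom_series B hB
  have hV2 : V * (1 - B) = 1 := geom_series_mul_neg B hB
  have hVnn : ∀ i j, 0 ≤ V i j := by
    intro i j
    have hs : Summable fun k : ℕ => B ^ k := summable_geometric_of_norm_lt_one hB
    have hmap : (entryCLM i j) V = ∑' k : ℕ, (B ^ k) i j :=
      (entryCLM i j).map_tsum hs
    have : V i j = ∑' k : ℕ, (B ^ k) i j := hmap
    rw [this]
    refine tsum_nonneg fun k => ?_
    exact pow_nonneg_entries (pow_nonneg_entries hnonneg N) k i j
  set S : Matrix (Fin n) (Fin n) ℝ := ∑ k ∈ Finset.range N, R ^ k with hS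
  have hSnn : ∀ i j, 0 ≤ S i j := by
    intro i j
    rw [hS, Matrix.sum_apply]
    exact Finset.sum_nonneg fun k _ => pow_nonneg_entries hnonneg k i j
  have hgeo : (1 - R) * S = 1 - B := by
    have h := mul_geom_sum R N
    have h2 : (1 - R) * S = -((R - 1) * S) := by rw [← neg_mul, neg_sub]
    rw [h2, h, neg_sub, hBdef]
  refine ⟨S * V, ?_, ?_, mul_nonneg_entries hSnn hVnn⟩
  · rw [← mul_assoc, hgeo, hV1]
  · rw [mul_eq_one_comm]
    rw [← mul_assoc, hgeo, hV1]

end Normed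

end Stmt7Aux

theorem stmt7 {n : ℕ} (R : Matrix (Fin n) (Fin n) ℝ) (T : ℝ) (hT : 0 ≤ T)
    (hnonneg : ∀ i j, 0 ≤ R i j) (hspec : SpecRadiusLtOne R)
    (lam : ℝ → Fin n → ℝ) (f : (Fin n → ℝ) → Fin n → ℝ)
    (x : ℝ → Fin n → ℝ)
    (hlam : ∀ t i, 0 ≤ lam t i) (hf : ∀ y i, 0 ≤ f y i)
    (hx : ∀ t ∈ Set.Icc (0 : ℝ) T, ∀ i, 0 ≤ x t i)
    (hlamcont : Continuous lam)
    (hfxcont : Continuous fun s => f (x s))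
    (hode : ∀ i, ∀ t ∈ Set.Icc (0 : ℝ) T,
      HasDerivAt (fun s => x s i) (lam t i - ((1 - Rᵀ) *ᵥ f (x t)) i) t) :
    ∀ i, ∀ t ∈ Set.Icc (0 : ℝ) T,
      x t i ≤ (∫ s in (0 : ℝ)..t, ((1 - Rᵀ)⁻¹ *ᵥ lam s) i) + ((1 - Rᵀ)⁻¹ *ᵥ x 0) i := by
  intro i t ht
  obtain ⟨W, hW1, hW2, hWnn⟩ := Stmt7Aux.inv_exists R hnonneg hspec
  set A : Matrix (Fin n) (Fin n) ℝ := 1 - Rᵀ with hAdef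
  have hAT : A = (1 - R)ᵀ := by
    rw [hAdef, Matrix.transpose_sub, Matrix.transpose_one]
  set M : Matrix (Fin n) (Fin n) ℝ := Wᵀ with hMdef
  have hAW : A * M = 1 := by
    rw [hAT, hMdef, ← Matrix.transpose_mul, hW2, Matrix.transpose_one]
  have hWA : M * A = 1 := by
    rw [hAT, hMdef, ← Matrix.transpose_mul, hW1, Matrix.transpose_one]
  have hinv : A⁻¹ = M := Matrix.inv_eq_right_inv hAW
  have hM : ∀ i j, 0 ≤ M i j := fun i j => hWnn j i
  -- the auxiliary function
  set g : ℝ → ℝ := fun s => (M *ᵥ x s) i with hg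
  -- derivative of g
  have hgderiv : ∀ s ∈ Set.Icc (0 : ℝ) T,
      HasDerivAt g ((M *ᵥ lam s) i - f (x s) i) s := by
    intro s hs
    have h1 : HasDerivAt (fun u => ∑ j, M i j * x u j)
        (∑ j, M i j * (lam s j - (A *ᵥ f (x s)) j)) s :=
      HasDerivAt.fun_sum fun j _ => (hode j s hs).const_mul (M i j)
    have hfun : g = fun u => ∑ j, M i j * x u j := by
      funext u
      simp [hg, Matrix.mulVec, dotProduct]
    have hval : (∑ j, M i j * (lam s j - (A *ᵥ f (x s)) j))
        = (M *ᵥ lam s) i - f (x s) i := by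
      have h2 : (∑ j, M i j * (lam s j - (A *ᵥ f (x s)) j))
          = (M *ᵥ (lam s - A *ᵥ f (x s))) i := by
        simp [Matrix.mulVec, dotProduct]
      rw [h2, Matrix.mulVec_sub, Matrix.mulVec_mulVec, hWA, Matrix.one_mulVec]
      rfl
    rw [hfun, ← hval]
    exact h1
  have hsub : Set.uIcc (0 : ℝ) t ⊆ Set.Icc (0 : ℝ) T := by
    rw [Set.uIcc_of_le ht.1]
    exact Set.Icc_subset_Icc le_rfl ht.2
  have hcont1 : Continuous fun s => (M *ᵥ lam s) i := by
    have : (fun s => (M *ᵥ lam s) i) = fun s => ∑ j, M i j * lam s j := by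
      funext s; simp [Matrix.mulVec, dotProduct]
    rw [this]
    exact continuous_finset_sum _ fun j _ =>
      continuous_const.mul ((continuous_apply j).comp hlamcont)
  have hcont2 : Continuous fun s => f (x s) i := (continuous_apply i).comp hfxcont
  have hInt : (∫ s in (0 : ℝ)..t, ((M *ᵥ lam s) i - f (x s) i)) = g t - g 0 :=
    intervalIntegral.integral_eq_sub_of_hasDerivAt (fun s hs => hgderiv s (hsub hs))
      ((hcont1.sub hcont2).intervalIntegrable 0 t)
  have hle : (∫ s in (0 : ℝ)..t, ((M *ᵥ lam s) i - f (x s) i))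
      ≤ ∫ s in (0 : ℝ)..t, (M *ᵥ lam s) i := by
    refine intervalIntegral.integral_mono_on ht.1
      ((hcont1.sub hcont2).intervalIntegrable 0 t) (hcont1.intervalIntegrable 0 t)
      (fun s _ => ?_)
    have := hf (x s) i
    linarith
  have hgt : g t ≤ (∫ s in (0 : ℝ)..t, (M *ᵥ lam s) i) + g 0 := by
    have := hInt ▸ hle
    linarith [hInt, hle]
  -- x t i ≤ g t
  have hynn : ∀ j, 0 ≤ (M *ᵥ x t) j := by
    intro j
    simp only [Matrix.mulVec, dotProduct]
    exact Finset.sum_nonneg fun k _ => mul_nonneg (hM j k) (hx t ht k)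
  have hxt : x t = A *ᵥ (M *ᵥ x t) := by
    rw [Matrix.mulVec_mulVec, hAW, Matrix.one_mulVec]
  have hxle : x t i ≤ g t := by
    have h3 : x t i = (M *ᵥ x t) i - (Rᵀ *ᵥ (M *ᵥ x t)) i := by
      conv_lhs => rw [hxt]
      rw [hAdef, Matrix.sub_mulVec, Matrix.one_mulVec]
      rfl
    rw [h3, hg]
    have h4 : 0 ≤ (Rᵀ *ᵥ (M *ᵥ x t)) i := by
      simp only [Matrix.mulVec, dotProduct]
      exact Finset.sum_nonneg fun j _ =>
        mul_nonneg (hnonneg j i) (hynn j)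
    linarith
  have hg0 : g 0 = (A⁻¹ *ᵥ x 0) i := by rw [hinv]
  calc x t i ≤ g t := hxle
    _ ≤ (∫ s in (0 : ℝ)..t, (M *ᵥ lam s) i) + g 0 := hgt
    _ = (∫ s in (0 : ℝ)..t, ((1 - Rᵀ)⁻¹ *ᵥ lam s) i) + ((1 - Rᵀ)⁻¹ *ᵥ x 0) i := by
        rw [hg0, ← hAdef, hinv]
end
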